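/- Suppose that for every integer n > 2 there is a prime q such that 2n − q and p_{q+2} + 2 are both prime. Then there are infinitely many primes q such that p_{q+2} + 2 is prime; in particular, there are infinitely many twin prime pairs. -/

import Mathlib

/-!
If all primes `q` with `p_{q+2} + 2` prime were at most `M`, take `n = 3 * M!`. The prime `q`
supplied for `n` divides `M!`, hence also `6 * M! - q`; since that number is prime, it equals `q`,
so `q = 3 * M! > M`. Twin primes follow because `q ↦ p_{q+2}` is injective and sends each such `q`
to the smaller member of a twin pair.
-/

/-- `nthPrime n` is the `n`-th prime `p_n`, so that `p_1 = 2`, `p_2 = 3`, etc. -/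
noncomputable def nthPrime (n : ℕ) : ℕ := Nat.nth Nat.Prime (n - 1)

lemma nthPrime_succ_prime (n : ℕ) : (nthPrime (n + 1)).Prime := Nat.prime_nth_prime n

lemma nthPrime_succ_injective : Function.Injective fun n ↦ nthPrime (n + 1) :=
  Nat.nth_injective Nat.infinite_setOfPred_prime

lemma Set.infinite_of_forall_exists_mem_prime_two_mul_sub_prime {S : Set ℕ}
    (hS : ∀ n, 2 < n → ∃ q ∈ S, q.Prime ∧ (2 * n - q).Prime) : S.Infinite := by
  intro hfin
  obtain ⟨M, hM⟩ := hfin.bddAbove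
  have hMfact := M.factorial_pos
  obtain ⟨q, hqS, hq, hr⟩ := hS (3 * M.factorial) (by omega)
  have hqM : q ≤ M := hM hqS
  have hqMfact : q ≤ M.factorial := hqM.trans M.self_le_factorial
  have hdvd : q ∣ 2 * (3 * M.factorial) - q :=
    Nat.dvd_sub (((Nat.dvd_factorial hq.pos hqM).mul_left 3).mul_left 2) dvd_rfl
  have := (Nat.prime_dvd_prime_iff_eq hq hr).mp hdvd
  omega

theorem conj_3_1_implies_twin_primes
    (h : ∀ n : ℕ, 2 < n → ∃ q : ℕ, q.Prime ∧ (2 * n - q).Prime ∧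
      (nthPrime (q + 2) + 2).Prime) :
    {q : ℕ | q.Prime ∧ (nthPrime (q + 2) + 2).Prime}.Infinite ∧
      {p : ℕ | p.Prime ∧ (p + 2).Prime}.Infinite := by
  have hS : {q : ℕ | q.Prime ∧ (nthPrime (q + 2) + 2).Prime}.Infinite :=
    Set.infinite_of_forall_exists_mem_prime_two_mul_sub_prime fun n hn ↦
      let ⟨q, hq, hnq, hq'⟩ := h n hn
      ⟨q, ⟨hq, hq'⟩, hq, hnq⟩
  refine ⟨hS, (hS.image (nthPrime_succ_injective.comp (add_left_injective 1)).injOn).mono ?_⟩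
  rintro _ ⟨q, ⟨-, htwin⟩, rfl⟩
  exact ⟨nthPrime_succ_prime (q + 1), htwin⟩
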